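/- arXiv:2509.11965 — 8 statements merged into one kernel-verified Lean document; each statement's English description precedes it below -/
import Mathlib

section
/- Let (U, S) be a set system in which every set has size at most d and which admits a hitting set of size at most h. Let X ⊆ S be a collection of pairwise disjoint sets, and let F ⊆ S be a sunflower (a family of sets whose pairwise intersections all equal a common core Y, with all petals S \ Y nonempty) of size d(h-1)+2 containing some set X ∈ X. Then there exists a set X' ∈ F with X' ≠ X such that (X \ {X}) ∪ {X'} is again a collection of pairwise disjoint sets. -/
open Finset

variable {α : Type*} [DecidableEq α] {ι : Type*} [Fintype ι] [DecidableEq ι]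

/-- A collection of finsets is pairwise disjoint. -/
def PairwiseDisj (X : Finset (Finset α)) : Prop :=
  (X : Set (Finset α)).PairwiseDisjoint id

/-- Number of elements of `Ui` covered by the packing `X`. -/
def covOf (Ui : Finset α) (X : Finset (Finset α)) : ℕ :=
  ((X.biUnion id) ∩ Ui).card

/-- `Hs` is a hitting set of the set system `S`. -/
def IsHitting (S : Finset (Finset α)) (Hs : Finset α) : Prop :=
  ∀ A ∈ S, (A ∩ Hs).Nonempty

/-- `F` is a sunflower with core `Y`: pairwise intersections all equal `Y`,
and all petals are nonempty. -/
def IsSunflower (F : Finset (Finset α)) (Y : Finset α) : Prop :=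
  (∀ A ∈ F, ∀ B ∈ F, A ≠ B → A ∩ B = Y) ∧ ∀ A ∈ F, (A \ Y).Nonempty

/-- Agent `i` rejects the packing `X` (with respect to the collection `S` and
partition `U`): it can remove a subfamily `Xrej` and add `i`-internal sets `Xint`
from `S` so that the result is pairwise disjoint and covers strictly more of `U i`. -/
def Rejects (U : ι → Finset α) (S : Finset (Finset α)) (i : ι)
    (X : Finset (Finset α)) : Prop :=
  ∃ Xrej ⊆ X, ∃ Xint : Finset (Finset α),
    (∀ A ∈ Xint, A ∈ S ∧ A ⊆ U i) ∧
    PairwiseDisj ((X \ Xrej) ∪ Xint) ∧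
    covOf (U i) X < covOf (U i) ((X \ Xrej) ∪ Xint)

/-- A packing is rejection-proof if no agent rejects it. -/
def RejectionProof (U : ι → Finset α) (S : Finset (Finset α))
    (X : Finset (Finset α)) : Prop :=
  ∀ i, ¬ Rejects U S i X

/-- Sunflower exchange: in a set system with sets of size at most d and a hitting
set of size at most h, if a packing X contains a member X0 of a sunflower F ⊆ S of
size d(h-1)+2, then X0 can be exchanged for another member of F keeping disjointness. -/
theorem stmt0 {α : Type*} [DecidableEq α] (S : Finset (Finset α)) (d h : ℕ)
    (hd : 0 < d) (hh : 0 < h)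
    (Hs : Finset α) (hHit : IsHitting S Hs) (hHcard : Hs.card ≤ h)
    (hsize : ∀ A ∈ S, A.card ≤ d)
    (X : Finset (Finset α)) (hXS : X ⊆ S) (hXdisj : PairwiseDisj X)
    (F : Finset (Finset α)) (hFS : F ⊆ S) (Y : Finset α)
    (hF : IsSunflower F Y) (hFcard : F.card = d * (h - 1) + 2)
    (X0 : Finset α) (hX0X : X0 ∈ X) (hX0F : X0 ∈ F) :
    ∃ X' ∈ F, X' ≠ X0 ∧ PairwiseDisj ((X.erase X0) ∪ {X'}) := by
  classical
  obtain ⟨hcore, hpet⟩ := hF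
  obtain ⟨a0, ha0⟩ := hHit X0 (hFS hX0F)
  -- choice function picking an element of A ∩ Hs
  set f : Finset α → α := fun A => if hn : (A ∩ Hs).Nonempty then hn.choose else a0 with hf
  have hfmem : ∀ A ∈ S, f A ∈ A ∩ Hs := by
    intro A hA
    have hn := hHit A hA
    simp only [hf, dif_pos hn]
    exact hn.choose_spec
  have hd1 : h - 1 ≤ d * (h - 1) := Nat.le_mul_of_pos_left _ hd
  -- Y ⊆ X0
  have hF1 : 1 < F.card := by omega
  obtain ⟨B0, hB0F, hB0ne⟩ := Finset.exists_mem_ne hF1 X0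
  have hYX0 : Y ⊆ X0 := by
    rw [← hcore X0 hX0F B0 hB0F (Ne.symm hB0ne)]
    exact Finset.inter_subset_left
  -- Y ∩ Hs nonempty
  have hYHs : (Y ∩ Hs).Nonempty := by
    by_contra hempty
    rw [Finset.not_nonempty_iff_eq_empty] at hempty
    have hinj : F.card ≤ Hs.card := by
      apply Finset.card_le_card_of_injOn f
      · intro A hA
        exact (Finset.mem_inter.1 (hfmem A (hFS hA))).2
      · intro A hA B hB hAB
        by_contra hne
        have h1 := hfmem A (hFS hA)
        have h2 := hfmem B (hFS hB)
        have : f A ∈ Y ∩ Hs := by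
          rw [← hcore A hA B hB hne]
          simp only [Finset.mem_inter] at h1 h2 ⊢
          exact ⟨⟨h1.1, hAB ▸ h2.1⟩, h1.2⟩
        rw [hempty] at this
        exact absurd this (Finset.notMem_empty _)
    omega
  obtain ⟨y, hy⟩ := hYHs
  have hyY : y ∈ Y := (Finset.mem_inter.1 hy).1
  have hyHs : y ∈ Hs := (Finset.mem_inter.1 hy).2
  have hyX0 : y ∈ X0 := hYX0 hyY
  -- sets in X.erase X0 are disjoint from X0, hence from Y
  have hdisjX0 : ∀ A ∈ X.erase X0, Disjoint A X0 := by
    intro A hA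
    exact hXdisj (Finset.mem_coe.2 (Finset.mem_of_mem_erase hA)) (Finset.mem_coe.2 hX0X)
      (Finset.ne_of_mem_erase hA)
  have hdisjY : ∀ A ∈ X.erase X0, Disjoint A Y :=
    fun A hA => Finset.disjoint_of_subset_right hYX0 (hdisjX0 A hA)
  -- blockers
  set T : Finset (Finset α) :=
    (X.erase X0).filter (fun A => ∃ X' ∈ F.erase X0, ¬ Disjoint A X') with hT
  have hTcard : T.card ≤ h - 1 := by
    have : T.card ≤ (Hs.erase y).card := by
      apply Finset.card_le_card_of_injOn f
      · intro A hA
        have hAX : A ∈ X.erase X0 := (Finset.mem_filter.1 hA).1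
        have hm := hfmem A (hXS (Finset.mem_of_mem_erase hAX))
        rw [Finset.mem_inter] at hm
        refine Finset.mem_erase.2 ⟨?_, hm.2⟩
        intro hfy
        exact (Finset.disjoint_left.1 (hdisjX0 A hAX)) hm.1 (hfy ▸ hyX0)
      · intro A hA B hB hAB
        by_contra hne
        have hAX : A ∈ X := Finset.mem_of_mem_erase (Finset.mem_filter.1 hA).1
        have hBX : B ∈ X := Finset.mem_of_mem_erase (Finset.mem_filter.1 hB).1
        have h1 := (Finset.mem_inter.1 (hfmem A (hXS hAX))).1
        have h2 := (Finset.mem_inter.1 (hfmem B (hXS hBX))).1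
        exact (Finset.disjoint_left.1 (hXdisj (Finset.mem_coe.2 hAX) (Finset.mem_coe.2 hBX) hne))
          h1 (hAB ▸ h2)
    have : (Hs.erase y).card = Hs.card - 1 := Finset.card_erase_of_mem hyHs
    omega
  -- bad petals
  set Bad : Finset (Finset α) :=
    (F.erase X0).filter (fun X' => ∃ A ∈ X.erase X0, ¬ Disjoint A X') with hBad
  have hBadsub : Bad ⊆ T.biUnion (fun A => (F.erase X0).filter (fun X' => ¬ Disjoint A X')) := by
    intro X' hX'
    rw [Finset.mem_filter] at hX'
    obtain ⟨hX'F, A, hAX, hAd⟩ := hX'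
    refine Finset.mem_biUnion.2 ⟨A, ?_, Finset.mem_filter.2 ⟨hX'F, hAd⟩⟩
    exact Finset.mem_filter.2 ⟨hAX, X', hX'F, hAd⟩
  have hper : ∀ A ∈ T, ((F.erase X0).filter (fun X' => ¬ Disjoint A X')).card ≤ d := by
    intro A hA
    have hAX : A ∈ X.erase X0 := (Finset.mem_filter.1 hA).1
    have hAdY := hdisjY A hAX
    set g : Finset α → α := fun X' => if hn : (A ∩ X').Nonempty then hn.choose else a0 with hg
    have hgmem : ∀ X', ¬ Disjoint A X' → g X' ∈ A ∩ X' := by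
      intro X' hnd
      rw [Finset.not_disjoint_iff_nonempty_inter] at hnd
      simp only [hg, dif_pos hnd]
      exact hnd.choose_spec
    have : ((F.erase X0).filter (fun X' => ¬ Disjoint A X')).card ≤ A.card := by
      apply Finset.card_le_card_of_injOn g
      · intro X' hX'
        exact (Finset.mem_inter.1 (hgmem X' (Finset.mem_filter.1 hX').2)).1
      · intro X1 h1 X2 h2 h12
        by_contra hne
        rw [Finset.mem_coe, Finset.mem_filter] at h1 h2
        have m1 := Finset.mem_inter.1 (hgmem X1 h1.2)
        have m2 := Finset.mem_inter.1 (hgmem X2 h2.2)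
        have hgY : g X1 ∈ Y := by
          rw [← hcore X1 (Finset.mem_of_mem_erase h1.1) X2 (Finset.mem_of_mem_erase h2.1) hne]
          exact Finset.mem_inter.2 ⟨m1.2, h12 ▸ m2.2⟩
        exact (Finset.disjoint_left.1 hAdY) m1.1 hgY
    exact le_trans this (hsize A (hXS (Finset.mem_of_mem_erase hAX)))
  have hBadcard : Bad.card ≤ d * (h - 1) := by
    calc Bad.card ≤ (T.biUnion (fun A => (F.erase X0).filter (fun X' => ¬ Disjoint A X'))).card :=
          Finset.card_le_card hBadsub
      _ ≤ ∑ A ∈ T, ((F.erase X0).filter (fun X' => ¬ Disjoint A X')).card :=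
          Finset.card_biUnion_le
      _ ≤ ∑ _A ∈ T, d := Finset.sum_le_sum hper
      _ = T.card * d := by rw [Finset.sum_const, smul_eq_mul]
      _ ≤ (h - 1) * d := Nat.mul_le_mul_right d hTcard
      _ = d * (h - 1) := Nat.mul_comm _ _
  -- find a good petal
  have hFecard : (F.erase X0).card = d * (h - 1) + 1 := by
    rw [Finset.card_erase_of_mem hX0F, hFcard]
    omega
  have hnsub : ¬ (F.erase X0 ⊆ Bad) := by
    intro hsub
    have := Finset.card_le_card hsub
    omega
  obtain ⟨X', hX'e, hX'nb⟩ := Finset.not_subset.1 hnsub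
  have hgood : ∀ A ∈ X.erase X0, Disjoint A X' := by
    intro A hA
    by_contra hnd
    exact hX'nb (Finset.mem_filter.2 ⟨hX'e, A, hA, hnd⟩)
  refine ⟨X', Finset.mem_of_mem_erase hX'e, Finset.ne_of_mem_erase hX'e, ?_⟩
  intro a ha b hb hab
  simp only [Finset.coe_union, Finset.coe_singleton, Set.mem_union, Finset.mem_coe,
    Set.mem_singleton_iff] at ha hb
  rcases ha with ha | ha <;> rcases hb with hb | hb
  · exact hXdisj (Finset.mem_coe.2 (Finset.mem_of_mem_erase ha))
      (Finset.mem_coe.2 (Finset.mem_of_mem_erase hb)) hab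
  · subst hb; exact hgood a ha
  · subst ha; exact (hgood b hb).symm
  · subst ha hb; exact absurd rfl hab
end

section
/- Let F be a sunflower with core Y and let X ⊆ F be one of its sets. If D is a finite family of pairwise disjoint sets, each of size at most d, with |D| ≤ h - 1, and every set in D is disjoint from Y, then at least |F| - d(h-1) - 1 sets X' ∈ F \ {X} have the property that X' is disjoint from every set in D. -/
open Finset

variable {α : Type*} [DecidableEq α] {ι : Type*} [Fintype ι] [DecidableEq ι]

/-- In a sunflower F with core Y, a family D of at most h-1 pairwise disjoint sets
of size at most d, all disjoint from Y, leaves at least |F| - d(h-1) - 1 sets of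
F \ {X0} disjoint from every member of D. -/
theorem stmt2 {α : Type*} [DecidableEq α] (d h : ℕ) (hd : 0 < d) (hh : 0 < h)
    (F : Finset (Finset α)) (Y : Finset α) (hF : IsSunflower F Y)
    (X0 : Finset α) (hX0 : X0 ∈ F)
    (D : Finset (Finset α)) (hDdisj : PairwiseDisj D)
    (hDsize : ∀ B ∈ D, B.card ≤ d) (hDcard : D.card ≤ h - 1)
    (hDY : ∀ B ∈ D, Disjoint B Y) :
    F.card - d * (h - 1) - 1 ≤
      ((F.erase X0).filter (fun A => ∀ B ∈ D, Disjoint A B)).card := by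
  classical
  set T := D.biUnion id with hT
  have hTcard : T.card ≤ d * (h - 1) := by
    calc T.card ≤ ∑ B ∈ D, B.card := Finset.card_biUnion_le
      _ ≤ ∑ _B ∈ D, d := Finset.sum_le_sum hDsize
      _ = D.card * d := by rw [Finset.sum_const, smul_eq_mul]
      _ ≤ (h - 1) * d := Nat.mul_le_mul_right _ hDcard
      _ = d * (h - 1) := Nat.mul_comm _ _
  set bad := (F.erase X0).filter (fun A => ¬ ∀ B ∈ D, Disjoint A B) with hbaddef
  have hbad : bad.card ≤ T.card := by
    apply Finset.card_le_card_of_surjOn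
      (fun x => if hx : ∃ A ∈ bad, x ∈ A then hx.choose else ∅)
    intro A hA
    simp only [Finset.coe_filter, Set.mem_setOf_eq, hbaddef] at hA
    obtain ⟨hAe, hAnd⟩ := hA
    push_neg at hAnd
    obtain ⟨B, hB, hABnd⟩ := hAnd
    obtain ⟨x, hxA, hxB⟩ := Finset.not_disjoint_iff.mp hABnd
    have hxT : x ∈ T := Finset.mem_biUnion.mpr ⟨B, hB, hxB⟩
    have hxY : x ∉ Y := fun hxY => Finset.disjoint_left.mp (hDY B hB) hxB hxY
    have hAbad : A ∈ bad := by
      simp only [hbaddef, Finset.mem_filter]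
      exact ⟨hAe, fun hall => hABnd (hall B hB)⟩
    have hex : ∃ A' ∈ bad, x ∈ A' := ⟨A, hAbad, hxA⟩
    refine ⟨x, hxT, ?_⟩
    simp only [dif_pos hex]
    obtain ⟨hA'bad, hxA'⟩ := hex.choose_spec
    by_contra hne
    have hA'F : hex.choose ∈ F := Finset.mem_of_mem_erase (Finset.mem_filter.mp hA'bad).1
    have hAF : A ∈ F := Finset.mem_of_mem_erase hAe
    have := hF.1 _ hA'F _ hAF hne
    exact hxY (this ▸ Finset.mem_inter.mpr ⟨hxA', hxA⟩)
  have hsplit := Finset.card_filter_add_card_filter_not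
    (s := F.erase X0) (p := fun A => ∀ B ∈ D, Disjoint A B)
  have herase : (F.erase X0).card = F.card - 1 := Finset.card_erase_of_mem hX0
  have hF1 : 1 ≤ F.card := Finset.card_pos.mpr ⟨X0, hX0⟩
  have hkey : bad.card ≤ d * (h - 1) := hbad.trans hTcard
  have hbadeq : ((F.erase X0).filter (fun A => ¬ ∀ B ∈ D, Disjoint A B)).card
      = bad.card := by rw [hbaddef]
  generalize d * (h - 1) = m at hkey ⊢
  omega
end

section
/- Let (U, S) be a set system with universe partitioned as U = U₁ ∪ ... ∪ U_p among p agents, where each part U_i is nonempty only if relevant, and each set in S has size at most d. For each i, let M_i ⊆ S[U_i] be a maximum-size (by number of covered elements of U_i) collection of pairwise disjoint i-internal sets. Then the union X* = M₁ ∪ ... ∪ M_p is a collection of pairwise disjoint sets that is rejection-proof: no agent i admits a subset X_rej ⊆ X* and a collection X_int of pairwise disjoint i-internal sets such that (X* \ X_rej) ∪ X_int is pairwise disjoint and covers strictly more elements of U_i than X* does. -/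
open Finset

variable {α : Type*} [DecidableEq α] {ι : Type*} [Fintype ι] [DecidableEq ι]

/-- The union over all agents of maximum coverage packings of internal sets is a
pairwise disjoint, rejection-proof packing. -/
theorem stmt3 {α : Type*} [DecidableEq α] {ι : Type*} [Fintype ι] [DecidableEq ι]
    (U : ι → Finset α) (hU : ∀ i j : ι, i ≠ j → Disjoint (U i) (U j))
    (S : Finset (Finset α)) (d : ℕ) (hsize : ∀ A ∈ S, A.card ≤ d)
    (M : ι → Finset (Finset α))
    (hMS : ∀ i, M i ⊆ S) (hMint : ∀ i, ∀ A ∈ M i, A ⊆ U i)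
    (hMdisj : ∀ i, PairwiseDisj (M i))
    (hMmax : ∀ i, ∀ N ⊆ S, (∀ A ∈ N, A ⊆ U i) → PairwiseDisj N →
      covOf (U i) N ≤ covOf (U i) (M i)) :
    PairwiseDisj (Finset.univ.biUnion M) ∧
      RejectionProof U S (Finset.univ.biUnion M) := by
  classical
  constructor
  · intro A hA B hB hAB
    obtain ⟨i, -, hAi⟩ := Finset.mem_biUnion.mp (Finset.mem_coe.mp hA)
    obtain ⟨j, -, hBj⟩ := Finset.mem_biUnion.mp (Finset.mem_coe.mp hB)
    by_cases hij : i = j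
    · subst hij
      exact hMdisj i (Finset.mem_coe.mpr hAi) (Finset.mem_coe.mpr hBj) hAB
    · exact (hU i j hij).mono (hMint i A hAi) (hMint j B hBj)
  · intro i ⟨Xrej, hXrej, Xint, hXint, hpd, hlt⟩
    set X := Finset.univ.biUnion M with hXdef
    set N := ((M i) \ Xrej) ∪ Xint with hN
    have hNsub : N ⊆ (X \ Xrej) ∪ Xint := by
      intro A hA
      rcases Finset.mem_union.mp hA with h | h
      · obtain ⟨h1, h2⟩ := Finset.mem_sdiff.mp h
        exact Finset.mem_union_left _ (Finset.mem_sdiff.mpr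
          ⟨Finset.mem_biUnion.mpr ⟨i, Finset.mem_univ i, h1⟩, h2⟩)
      · exact Finset.mem_union_right _ h
    have hNS : N ⊆ S := by
      intro A hA
      rcases Finset.mem_union.mp hA with h | h
      · exact hMS i (Finset.mem_sdiff.mp h).1
      · exact (hXint A h).1
    have hNint : ∀ A ∈ N, A ⊆ U i := by
      intro A hA
      rcases Finset.mem_union.mp hA with h | h
      · exact hMint i A (Finset.mem_sdiff.mp h).1
      · exact (hXint A h).2
    have hNpd : PairwiseDisj N := hpd.subset (Finset.coe_subset.mpr hNsub)
    have h1 : covOf (U i) ((X \ Xrej) ∪ Xint) ≤ covOf (U i) N := by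
      apply Finset.card_le_card
      intro x hx
      obtain ⟨hx1, hx2⟩ := Finset.mem_inter.mp hx
      obtain ⟨A, hA, hxA⟩ := Finset.mem_biUnion.mp hx1
      refine Finset.mem_inter.mpr ⟨Finset.mem_biUnion.mpr ⟨A, ?_, hxA⟩, hx2⟩
      rcases Finset.mem_union.mp hA with h | h
      · obtain ⟨hAX, hArej⟩ := Finset.mem_sdiff.mp h
        obtain ⟨j, -, hAj⟩ := Finset.mem_biUnion.mp hAX
        have hji : j = i := by
          by_contra hji
          exact Finset.disjoint_left.mp (hU j i hji) (hMint j A hAj hxA) hx2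
        subst hji
        exact Finset.mem_union_left _ (Finset.mem_sdiff.mpr ⟨hAj, hArej⟩)
      · exact Finset.mem_union_right _ h
    have h2 : covOf (U i) N ≤ covOf (U i) (M i) := hMmax i N hNS hNint hNpd
    have h3 : covOf (U i) (M i) ≤ covOf (U i) X := by
      apply Finset.card_le_card
      intro x hx
      obtain ⟨hx1, hx2⟩ := Finset.mem_inter.mp hx
      obtain ⟨A, hA, hxA⟩ := Finset.mem_biUnion.mp hx1
      exact Finset.mem_inter.mpr ⟨Finset.mem_biUnion.mpr
        ⟨A, Finset.mem_biUnion.mpr ⟨i, Finset.mem_univ i, hA⟩, hxA⟩, hx2⟩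
    omega
end

section
/- Let (U₁, ..., U_p, S) be a partitioned set system and let X* be a rejection-proof collection of pairwise disjoint sets from S. If X ∈ S is disjoint from every set in X*, then X* ∪ {X} is also rejection-proof. -/
open Finset

variable {α : Type*} [DecidableEq α] {ι : Type*} [Fintype ι] [DecidableEq ι]

lemma covOf_mono {α : Type*} [DecidableEq α] (Ui : Finset α) {X Y : Finset (Finset α)}
    (h : X ⊆ Y) : covOf Ui X ≤ covOf Ui Y :=
  card_le_card (inter_subset_inter (biUnion_subset_biUnion_of_subset_left _ h) le_rfl)

lemma covOf_insert {α : Type*} [DecidableEq α] (Ui A : Finset α) {Z : Finset (Finset α)}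
    (h : ∀ B ∈ Z, Disjoint A B) :
    covOf Ui (insert A Z) = (A ∩ Ui).card + covOf Ui Z := by
  have hd : Disjoint (A ∩ Ui) (Z.biUnion id ∩ Ui) :=
    Disjoint.mono inter_subset_left inter_subset_left
      ((disjoint_biUnion_right A Z id).mpr h)
  simp only [covOf, biUnion_insert, id_eq]
  rw [union_inter_distrib_right, card_union_of_disjoint hd]

/-- Adding a set disjoint from every member of a rejection-proof packing preserves
rejection-proofness. -/
theorem stmt4 {α : Type*} [DecidableEq α] {ι : Type*} [DecidableEq ι]
    (U : ι → Finset α) (hU : ∀ i j : ι, i ≠ j → Disjoint (U i) (U j))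
    (S : Finset (Finset α))
    (X : Finset (Finset α)) (hXS : X ⊆ S) (hdisj : PairwiseDisj X)
    (hrp : RejectionProof U S X)
    (A : Finset α) (hA : A ∈ S) (hAdisj : ∀ B ∈ X, Disjoint A B) :
    RejectionProof U S (insert A X) := by
  intro i hrej
  by_cases hAX : A ∈ X
  · rw [insert_eq_self.mpr hAX] at hrej; exact hrp i hrej
  obtain ⟨Xrej, hsub, Xint, hint, hpd, hcov⟩ := hrej
  by_cases hArej : A ∈ Xrej
  · -- A is removed: rejection of X via Xrej.erase A
    have hset : insert A X \ Xrej = X \ Xrej.erase A := by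
      ext B
      simp only [mem_sdiff, mem_insert, mem_erase]
      constructor
      · rintro ⟨hB | hB, hBr⟩
        · exact absurd hArej (hB ▸ hBr)
        · exact ⟨hB, fun h => hBr h.2⟩
      · rintro ⟨hB, hBr⟩
        exact ⟨Or.inr hB, fun h => hBr ⟨fun hBA => hAX (hBA ▸ hB), h⟩⟩
    rw [hset] at hpd hcov
    exact hrp i ⟨Xrej.erase A,
      (fun B hB => (mem_insert.mp (hsub (mem_erase.mp hB).2)).resolve_left
        (mem_erase.mp hB).1), Xint, hint, hpd,
      lt_of_le_of_lt (covOf_mono _ (subset_insert _ _)) hcov⟩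
  · have hsub' : Xrej ⊆ X := fun B hB =>
      (mem_insert.mp (hsub hB)).resolve_left (fun h => hArej (h ▸ hB))
    have hset : insert A X \ Xrej = insert A (X \ Xrej) := by
      ext B
      simp only [mem_sdiff, mem_insert]
      have : ∀ h : B ∈ Xrej, B ≠ A := fun h hBA => hArej (hBA ▸ h)
      tauto
    rw [hset] at hpd hcov
    by_cases hAint : A ∈ Xint
    · have heq : insert A (X \ Xrej) ∪ Xint = (X \ Xrej) ∪ Xint := by
        rw [insert_union, insert_eq_self.mpr (mem_union_right _ hAint)]
      rw [heq] at hpd hcov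
      exact hrp i ⟨Xrej, hsub', Xint, hint, hpd,
        lt_of_le_of_lt (covOf_mono _ (subset_insert _ _)) hcov⟩
    · set Y' := (X \ Xrej) ∪ Xint with hY'
      have hAY' : A ∉ Y' := by
        simp only [hY', mem_union, mem_sdiff]
        rintro (⟨h, _⟩ | h)
        · exact hAX h
        · exact hAint h
      have hins : insert A (X \ Xrej) ∪ Xint = insert A Y' := by
        rw [hY', insert_union]
      rw [hins] at hpd hcov
      have hdA : ∀ B ∈ Y', Disjoint A B := fun B hB =>
        hpd (mem_insert_self _ _) (mem_insert_of_mem hB)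
          (fun h => hAY' (h ▸ hB))
      have hpd' : PairwiseDisj Y' :=
        hpd.subset (by simp only [coe_insert]; exact Set.subset_insert _ _)
      have h1 : covOf (U i) (insert A X) = (A ∩ U i).card + covOf (U i) X :=
        covOf_insert _ _ hAdisj
      have h2 : covOf (U i) (insert A Y') = (A ∩ U i).card + covOf (U i) Y' :=
        covOf_insert _ _ hdA
      rw [h1, h2] at hcov
      have h3 : covOf (U i) X < covOf (U i) Y' := by omega
      exact hrp i ⟨Xrej, hsub', Xint, hint, hpd', h3⟩
end

section
/- Let (U₁, ..., U_p, S, k) be an instance of Rejection-Proof d-Set Packing in which at least k distinct agents i have a nonempty collection S[U_i] of i-internal sets. Then the instance is a YES-instance: there exists a rejection-proof packing of pairwise disjoint sets from S covering at least k elements. -/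
open Finset

variable {α : Type*} [DecidableEq α] {ι : Type*} [Fintype ι] [DecidableEq ι]

lemma covOf_eq_filter {α : Type*} [DecidableEq α] (Ui : Finset α) (W : Finset (Finset α))
    (h : ∀ A ∈ W, ¬ A ⊆ Ui → Disjoint A Ui) :
    covOf Ui W = covOf Ui (W.filter (fun A => A ⊆ Ui)) := by
  classical
  unfold covOf
  congr 1
  ext x
  simp only [mem_inter, mem_biUnion, id, mem_filter]
  constructor
  · rintro ⟨⟨A, hA, hxA⟩, hxU⟩
    refine ⟨⟨A, ⟨hA, ?_⟩, hxA⟩, hxU⟩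
    by_contra hsub
    exact Finset.disjoint_left.mp (h A hA hsub) hxA hxU
  · rintro ⟨⟨A, ⟨hA, _⟩, hxA⟩, hxU⟩
    exact ⟨⟨A, hA, hxA⟩, hxU⟩

/-- If at least k agents have a nonempty collection of internal sets, then there
is a rejection-proof packing covering at least k elements. -/
theorem stmt7 {α : Type*} [DecidableEq α] {ι : Type*} [Fintype ι] [DecidableEq ι]
    (U : ι → Finset α) (hU : ∀ i j : ι, i ≠ j → Disjoint (U i) (U j))
    (S : Finset (Finset α)) (k d : ℕ)
    (hne : ∀ A ∈ S, A.Nonempty) (hsize : ∀ A ∈ S, A.card ≤ d)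
    (hagents : k ≤ ((Finset.univ : Finset ι).filter (fun i => ∃ A ∈ S, A ⊆ U i)).card) :
    ∃ X ⊆ S, PairwiseDisj X ∧ RejectionProof U S X ∧ k ≤ (X.biUnion id).card := by
  classical
  -- For each agent, pick a maximum packing of internal sets.
  have hmax : ∀ i : ι, ∃ P : Finset (Finset α), (∀ A ∈ P, A ∈ S ∧ A ⊆ U i) ∧ PairwiseDisj P ∧
      ∀ Q : Finset (Finset α), (∀ A ∈ Q, A ∈ S ∧ A ⊆ U i) → PairwiseDisj Q →
        covOf (U i) Q ≤ covOf (U i) P := by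
    intro i
    have hne' : ((S.filter (fun A => A ⊆ U i)).powerset.filter
        (fun P => PairwiseDisj P)).Nonempty := by
      refine ⟨∅, ?_⟩
      refine Finset.mem_filter.mpr ⟨Finset.empty_mem_powerset _, ?_⟩
      simp [PairwiseDisj]
    obtain ⟨P, hP, hPmax⟩ := Finset.exists_max_image _ (fun P => covOf (U i) P) hne'
    simp only [mem_filter, mem_powerset] at hP
    refine ⟨P, ?_, hP.2, ?_⟩
    · intro A hA
      have := hP.1 hA
      simp only [mem_filter] at this
      exact this
    · intro Q hQ hQd
      refine hPmax Q ?_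
      simp only [mem_filter, mem_powerset]
      refine ⟨?_, hQd⟩
      intro A hA
      simp only [mem_filter]
      exact hQ A hA
  choose P hPmem hPdisj hPopt using hmax
  set X : Finset (Finset α) := Finset.univ.biUnion P with hXdef
  have hmemX : ∀ A ∈ X, ∃ i, A ∈ P i := by
    intro A hA
    simp only [hXdef, mem_biUnion, mem_univ, true_and] at hA
    exact hA
  have hXS : X ⊆ S := by
    intro A hA
    obtain ⟨i, hi⟩ := hmemX A hA
    exact (hPmem i A hi).1
  -- Key: a set contained in U j with j ≠ i is disjoint from U i.
  have hdisjU : ∀ (A : Finset α) (i j : ι), A ∈ P j → j ≠ i → Disjoint A (U i) := by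
    intro A i j hA hji
    exact Disjoint.mono_left (hPmem j A hA).2 (hU j i hji)
  -- A set in X contained in U i must be in P i.
  have hsubP : ∀ (A : Finset α) (i : ι), A ∈ X → A ⊆ U i → A ∈ P i := by
    intro A i hA hAU
    obtain ⟨j, hj⟩ := hmemX A hA
    rcases eq_or_ne j i with rfl | hji
    · exact hj
    · exfalso
      obtain ⟨x, hx⟩ := hne A (hXS hA)
      exact Finset.disjoint_left.mp (hdisjU A i j hj hji) hx (hAU hx)
  have hfilterX : ∀ i : ι, X.filter (fun A => A ⊆ U i) = P i := by
    intro i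
    ext A
    simp only [mem_filter]
    constructor
    · rintro ⟨hA, hAU⟩
      exact hsubP A i hA hAU
    · intro hA
      refine ⟨?_, (hPmem i A hA).2⟩
      simp only [hXdef, mem_biUnion, mem_univ, true_and]
      exact ⟨i, hA⟩
  have hcovX : ∀ i : ι, covOf (U i) X = covOf (U i) (P i) := by
    intro i
    rw [covOf_eq_filter (U i) X, hfilterX i]
    intro A hA hAU
    obtain ⟨j, hj⟩ := hmemX A hA
    rcases eq_or_ne j i with rfl | hji
    · exact absurd (hPmem j A hj).2 hAU
    · exact hdisjU A i j hj hji
  refine ⟨X, hXS, ?_, ?_, ?_⟩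
  · -- pairwise disjoint
    intro A hA B hB hAB
    simp only [Finset.mem_coe] at hA hB
    obtain ⟨i, hi⟩ := hmemX A hA
    obtain ⟨j, hj⟩ := hmemX B hB
    rcases eq_or_ne i j with rfl | hij
    · exact hPdisj i hi hj hAB
    · exact Disjoint.mono (hPmem i A hi).2 (hPmem j B hj).2 (hU i j hij)
  · -- rejection-proof
    intro i hrej
    obtain ⟨Xrej, hXrej, Xint, hXint, hWdisj, hlt⟩ := hrej
    set W : Finset (Finset α) := (X \ Xrej) ∪ Xint with hWdef
    set Y : Finset (Finset α) := W.filter (fun A => A ⊆ U i) with hYdef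
    have hWmem : ∀ A ∈ W, A ∈ S ∧ (A ⊆ U i ∨ Disjoint A (U i)) := by
      intro A hA
      simp only [hWdef, mem_union, mem_sdiff] at hA
      rcases hA with ⟨hA, _⟩ | hA
      · obtain ⟨j, hj⟩ := hmemX A hA
        refine ⟨hXS hA, ?_⟩
        rcases eq_or_ne j i with rfl | hji
        · exact Or.inl (hPmem j A hj).2
        · exact Or.inr (hdisjU A i j hj hji)
      · exact ⟨(hXint A hA).1, Or.inl (hXint A hA).2⟩
    have hcovW : covOf (U i) W = covOf (U i) Y := by
      rw [hYdef, covOf_eq_filter (U i) W]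
      intro A hA hAU
      rcases (hWmem A hA).2 with h | h
      · exact absurd h hAU
      · exact h
    have hYle : covOf (U i) Y ≤ covOf (U i) (P i) := by
      refine hPopt i Y ?_ ?_
      · intro A hA
        simp only [hYdef, mem_filter] at hA
        exact ⟨(hWmem A hA.1).1, hA.2⟩
      · intro A hA B hB hAB
        simp only [hYdef, Finset.coe_filter, Set.mem_setOf_eq] at hA hB
        exact hWdisj hA.1 hB.1 hAB
    rw [hcovX i] at hlt
    omega
  · -- covers at least k elements
    set T := (Finset.univ : Finset ι).filter (fun i => ∃ A ∈ S, A ⊆ U i) with hTdef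
    have hone : ∀ i ∈ T, 1 ≤ ((X.biUnion id) ∩ U i).card := by
      intro i hi
      simp only [hTdef, mem_filter, mem_univ, true_and] at hi
      obtain ⟨A, hAS, hAU⟩ := hi
      have h1 : covOf (U i) {A} ≤ covOf (U i) (P i) := by
        refine hPopt i {A} ?_ ?_
        · intro B hB
          simp only [mem_singleton] at hB
          subst hB
          exact ⟨hAS, hAU⟩
        · intro B hB C hC hBC
          simp only [coe_singleton, Set.mem_singleton_iff] at hB hC
          exact absurd (hB.trans hC.symm) hBC
      have h2 : covOf (U i) {A} = A.card := by
        unfold covOf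
        rw [Finset.singleton_biUnion, id, Finset.inter_eq_left.mpr hAU]
      have h3 : 1 ≤ A.card := Finset.card_pos.mpr (hne A hAS)
      have h4 : covOf (U i) (P i) ≤ ((X.biUnion id) ∩ U i).card := by
        unfold covOf
        refine Finset.card_le_card (Finset.inter_subset_inter ?_ le_rfl)
        refine Finset.biUnion_subset_biUnion_of_subset_left _ ?_
        intro B hB
        simp only [hXdef, mem_biUnion, mem_univ, true_and]
        exact ⟨i, hB⟩
      omega
    calc k ≤ T.card := hagents
      _ = ∑ i ∈ T, 1 := by simp
      _ ≤ ∑ i ∈ T, ((X.biUnion id) ∩ U i).card := Finset.sum_le_sum hone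
      _ = (T.biUnion (fun i => (X.biUnion id) ∩ U i)).card := by
          rw [Finset.card_biUnion]
          intro i hi j hj hij
          exact Disjoint.mono (Finset.inter_subset_right) (Finset.inter_subset_right)
            (hU i j hij)
      _ ≤ (X.biUnion id).card := by
          refine Finset.card_le_card ?_
          intro x hx
          simp only [mem_biUnion] at hx
          obtain ⟨i, _, hx⟩ := hx
          exact (Finset.mem_inter.mp hx).1
end

section
/- Let (U₁, ..., U_p, S, k) be a partitioned set system with all sets of size at most d ≥ 1. Let X ⊆ S be an inclusion-wise maximal packing of pairwise disjoint sets, and suppose further that X is maximal among rejection-proof packings (no proper rejection-proof superset packing exists). If there exists a pairwise disjoint collection in S of size strictly greater than k, then X covers at least k elements. In particular, if a greedy maximal disjoint packing has more than k sets, the instance has a rejection-proof packing covering at least k elements. -/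
open Finset

variable {α : Type*} [DecidableEq α] {ι : Type*} [Fintype ι] [DecidableEq ι]

/-- A maximal rejection-proof packing covers at least k elements whenever some
pairwise disjoint subcollection of S has more than k sets. -/
theorem stmt8 {α : Type*} [DecidableEq α] {ι : Type*} [DecidableEq ι]
    (U : ι → Finset α) (hU : ∀ i j : ι, i ≠ j → Disjoint (U i) (U j))
    (S : Finset (Finset α)) (k d : ℕ) (hd : 1 ≤ d)
    (hne : ∀ A ∈ S, A.Nonempty) (hsize : ∀ A ∈ S, A.card ≤ d)
    (X : Finset (Finset α)) (hXS : X ⊆ S) (hdisj : PairwiseDisj X)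
    (hrp : RejectionProof U S X)
    (hmaxpack : ∀ A ∈ S, A ∉ X → ∃ B ∈ X, ¬ Disjoint A B)
    (hmaxrp : ∀ Y : Finset (Finset α), X ⊆ Y → Y ⊆ S → PairwiseDisj Y →
      RejectionProof U S Y → Y = X)
    (hbig : ∃ Z ⊆ S, PairwiseDisj Z ∧ k < Z.card) :
    k ≤ (X.biUnion id).card := by
  classical
  obtain ⟨Z, hZS, hZdisj, hk⟩ := hbig
  -- every A ∈ Z meets the covered region
  have hmeet : ∀ A ∈ Z, (A ∩ X.biUnion id).Nonempty := by
    intro A hA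
    by_cases hAX : A ∈ X
    · obtain ⟨x, hx⟩ := hne A (hZS hA)
      exact ⟨x, Finset.mem_inter.2 ⟨hx, Finset.mem_biUnion.2 ⟨A, hAX, hx⟩⟩⟩
    · obtain ⟨B, hBX, hnd⟩ := hmaxpack A (hZS hA) hAX
      obtain ⟨x, hxA, hxB⟩ := Finset.not_disjoint_iff.1 hnd
      exact ⟨x, Finset.mem_inter.2 ⟨hxA, Finset.mem_biUnion.2 ⟨B, hBX, hxB⟩⟩⟩
  have hαne : Nonempty α := by
    have h0 : 0 < Z.card := lt_of_le_of_lt (Nat.zero_le k) hk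
    obtain ⟨A, hA⟩ := Finset.card_pos.1 h0
    exact ⟨(hmeet A hA).choose⟩
  set f : Finset α → α := fun A =>
    if h : (A ∩ X.biUnion id).Nonempty then h.choose else Classical.arbitrary α with hf
  have hfmem : ∀ A ∈ Z, f A ∈ A ∩ X.biUnion id := by
    intro A hA
    have h := hmeet A hA
    simp only [hf, dif_pos h]
    exact h.choose_spec
  have hcard : Z.card ≤ (X.biUnion id).card := by
    apply Finset.card_le_card_of_injOn f
    · intro A hA
      exact (Finset.mem_inter.1 (hfmem A hA)).2
    · intro A hA B hB hAB
      by_contra hne'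
      have hxA : f A ∈ A := (Finset.mem_inter.1 (hfmem A hA)).1
      have hxB : f B ∈ B := (Finset.mem_inter.1 (hfmem B hB)).1
      have := hZdisj hA hB hne'
      exact (Finset.disjoint_left.1 this) hxA (hAB ▸ hxB)
  omega
end

section
/- Sunflower lemma: Let (U, S) be a finite set system such that each set in S is nonempty and has size at most d. If |S| > d · d! · (z-1)^d, then S contains a sunflower with z petals, i.e., z distinct sets S₁, ..., S_z ∈ S and a set Y such that S_i ∩ S_j = Y for all i ≠ j and each petal S_i \ Y is nonempty. -/
open Finset

variable {α : Type*} [DecidableEq α] {ι : Type*} [Fintype ι] [DecidableEq ι]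

private lemma sunflower_of_disjoint {α : Type*} [DecidableEq α]
    {F : Finset (Finset α)} (hdisj : PairwiseDisj F) (hne : ∀ A ∈ F, A.Nonempty) :
    IsSunflower F ∅ := by
  constructor
  · intro A hA B hB hAB
    exact Finset.disjoint_iff_inter_eq_empty.mp
      (hdisj (Finset.mem_coe.mpr hA) (Finset.mem_coe.mpr hB) hAB)
  · intro A hA
    simpa using hne A hA

private lemma sunflower_aux {α : Type*} [DecidableEq α] (z : ℕ) (hz : 2 ≤ z) :
    ∀ d, 0 < d → ∀ S : Finset (Finset α), (∀ A ∈ S, A.Nonempty) →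
    (∀ A ∈ S, A.card ≤ d) → d * Nat.factorial d * (z - 1) ^ d < S.card →
    ∃ F ⊆ S, ∃ Y : Finset α, F.card = z ∧ IsSunflower F Y := by
  intro d
  induction d with
  | zero => intro h; exact absurd h (lt_irrefl 0)
  | succ n ih =>
    intro _ S hne hsize hbig
    classical
    have hz1 : 0 < z - 1 := by omega
    by_cases hdisj : ∃ D ⊆ S, PairwiseDisj D ∧ z ≤ D.card
    · obtain ⟨D, hDS, hDdisj, hDz⟩ := hdisj
      obtain ⟨F, hFD, hFcard⟩ := Finset.exists_subset_card_eq hDz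
      refine ⟨F, hFD.trans hDS, ∅, hFcard, ?_⟩
      exact sunflower_of_disjoint
        (fun A hA B hB hAB => hDdisj (hFD hA) (hFD hB) hAB)
        (fun A hA => hne A (hDS (hFD hA)))
    · push_neg at hdisj
      rcases Nat.eq_zero_or_pos n with hn | hn
      · -- base case d = 1: all sets are singletons, any z of them are disjoint
        subst hn
        have hScard : z ≤ S.card := by
          simp [Nat.factorial] at hbig; omega
        obtain ⟨F, hFS, hFcard⟩ := Finset.exists_subset_card_eq hScard
        refine ⟨F, hFS, ∅, hFcard, ?_⟩
        have hsingle : ∀ A ∈ F, ∃ a, A = {a} := by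
          intro A hA
          exact Finset.card_eq_one.mp
            (le_antisymm (hsize A (hFS hA)) (Finset.card_pos.mpr (hne A (hFS hA))))
        refine sunflower_of_disjoint ?_ (fun A hA => hne A (hFS hA))
        intro A hA B hB hAB
        obtain ⟨a, rfl⟩ := hsingle A hA
        obtain ⟨b, rfl⟩ := hsingle B hB
        show Disjoint ({a} : Finset α) {b}
        rw [Finset.disjoint_singleton]
        rintro rfl; exact hAB rfl
      · -- inductive step
        set P := S.powerset.filter (fun D => PairwiseDisj D) with hP
        have hPne : P.Nonempty := ⟨∅, by
          rw [hP, Finset.mem_filter]; exact ⟨Finset.empty_mem_powerset _, by simp [PairwiseDisj]⟩⟩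
        obtain ⟨D, hDP, hDmax⟩ := Finset.exists_max_image P Finset.card hPne
        have hDS : D ⊆ S := Finset.mem_powerset.mp (Finset.mem_filter.mp hDP).1
        have hDdisj : PairwiseDisj D := (Finset.mem_filter.mp hDP).2
        set H := D.biUnion id with hH
        -- H hits every set in S
        have hhit : ∀ A ∈ S, (A ∩ H).Nonempty := by
          intro A hA
          by_contra hcon
          rw [Finset.not_nonempty_iff_eq_empty] at hcon
          have hAnotD : A ∉ D := by
            intro hAD
            have : A ⊆ H := Finset.subset_biUnion_of_mem id hAD
            have := hne A hA
            rw [Finset.inter_eq_left.mpr ‹A ⊆ H›] at hcon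
            simp [hcon] at this
          have hins : insert A D ∈ P := by
            rw [hP, Finset.mem_filter, Finset.mem_powerset]
            refine ⟨Finset.insert_subset hA hDS, ?_⟩
            rw [PairwiseDisj, Finset.coe_insert]
            refine hDdisj.insert ?_
            intro B hB _
            rw [Finset.disjoint_left]
            intro a haA haB
            have : a ∈ A ∩ H := Finset.mem_inter.mpr
              ⟨haA, Finset.mem_biUnion.mpr ⟨B, hB, haB⟩⟩
            simp [hcon] at this
          have := hDmax _ hins
          rw [Finset.card_insert_of_notMem hAnotD] at this
          omega
        -- size of H
        have hDcard : D.card ≤ z - 1 := by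
          have := hdisj D hDS hDdisj
          omega
        have hHcard : H.card ≤ (z - 1) * (n + 1) := by
          calc H.card ≤ ∑ A ∈ D, A.card := Finset.card_biUnion_le
            _ ≤ D.card • (n + 1) :=
              Finset.sum_le_card_nsmul _ _ _ (fun A hA => hsize A (hDS hA))
            _ ≤ (z - 1) * (n + 1) := by
              rw [smul_eq_mul]; exact Nat.mul_le_mul_right _ hDcard
        -- pigeonhole
        set K := Nat.factorial (n + 1) * (z - 1) ^ n with hK
        have hSsub : S ⊆ H.biUnion (fun x => S.filter (fun A => x ∈ A)) := by
          intro A hA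
          obtain ⟨x, hx⟩ := hhit A hA
          rw [Finset.mem_inter] at hx
          exact Finset.mem_biUnion.mpr ⟨x, hx.2, Finset.mem_filter.mpr ⟨hA, hx.1⟩⟩
        have hsum : ∑ x ∈ H, (fun _ => K) x < ∑ x ∈ H, (S.filter (fun A => x ∈ A)).card := by
          calc ∑ x ∈ H, (fun _ => K) x = H.card * K := by
                rw [Finset.sum_const, smul_eq_mul]
            _ ≤ (z - 1) * (n + 1) * K := Nat.mul_le_mul_right _ hHcard
            _ = (n + 1) * Nat.factorial (n + 1) * (z - 1) ^ (n + 1) := by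
                rw [hK, pow_succ]; ring
            _ < S.card := hbig
            _ ≤ ∑ x ∈ H, (S.filter (fun A => x ∈ A)).card :=
                le_trans (Finset.card_le_card hSsub) Finset.card_biUnion_le
        obtain ⟨x, _, hx⟩ := Finset.exists_lt_of_sum_lt hsum
        set Sx := S.filter (fun A => x ∈ A) with hSx
        have hxmem : ∀ A ∈ Sx, x ∈ A ∧ A ∈ S := by
          intro A hA; rw [hSx, Finset.mem_filter] at hA; exact ⟨hA.2, hA.1⟩
        set S' := Sx.image (fun A => A.erase x) with hS'
        have hS'card : S'.card = Sx.card := by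
          apply Finset.card_image_of_injOn
          intro A hA B hB hAB
          have hA' := hxmem A (Finset.mem_coe.mp hA)
          have hB' := hxmem B (Finset.mem_coe.mp hB)
          have hAB' : A.erase x = B.erase x := hAB
          rw [← Finset.insert_erase hA'.1, hAB', Finset.insert_erase hB'.1]
        set S'' := S'.erase ∅ with hS''
        have hS'sub : S' ⊆ insert ∅ S'' := by
          rw [hS'']
          exact Finset.subset_insert_iff.mpr (Finset.Subset.refl _)
        have hS''card : S'.card ≤ S''.card + 1 :=
          le_trans (Finset.card_le_card hS'sub) (Finset.card_insert_le _ _)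
        have hfac : 0 < Nat.factorial n * (z - 1) ^ n :=
          Nat.mul_pos (Nat.factorial_pos n) (Nat.pow_pos hz1)
        have hbig'' : n * Nat.factorial n * (z - 1) ^ n < S''.card := by
          have h1 : K < Sx.card := hx
          have hKval : K = (n + 1) * (Nat.factorial n * (z - 1) ^ n) := by
            rw [hK, Nat.factorial_succ]; ring
          have : n * Nat.factorial n * (z - 1) ^ n + Nat.factorial n * (z - 1) ^ n = K := by
            rw [hKval]; ring
          omega
        -- properties of S''
        have hS''mem : ∀ B ∈ S'', B.Nonempty ∧ B.card ≤ n ∧ x ∉ B ∧ insert x B ∈ S := by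
          intro B hB
          rw [hS'', Finset.mem_erase] at hB
          obtain ⟨hBne, hBS'⟩ := hB
          rw [hS', Finset.mem_image] at hBS'
          obtain ⟨A, hA, rfl⟩ := hBS'
          obtain ⟨hxA, hAS⟩ := hxmem A hA
          refine ⟨Finset.nonempty_iff_ne_empty.mpr hBne, ?_, Finset.notMem_erase _ _, ?_⟩
          · rw [Finset.card_erase_of_mem hxA]
            have := hsize A hAS; omega
          · rw [Finset.insert_erase hxA]; exact hAS
        obtain ⟨F', hF'S'', Y', hF'card, hF'sun⟩ :=
          ih hn S'' (fun B hB => (hS''mem B hB).1) (fun B hB => (hS''mem B hB).2.1) hbig''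
        -- lift the sunflower
        have hlift : ∀ B ∈ F', x ∉ B ∧ insert x B ∈ S := by
          intro B hB
          have := hS''mem B (hF'S'' hB)
          exact ⟨this.2.2.1, this.2.2.2⟩
        refine ⟨F'.image (insert x), ?_, insert x Y', ?_, ?_, ?_⟩
        · intro A hA
          rw [Finset.mem_image] at hA
          obtain ⟨B, hB, rfl⟩ := hA
          exact (hlift B hB).2
        · rw [← hF'card]
          apply Finset.card_image_of_injOn
          intro B₁ hB₁ B₂ hB₂ heq
          have h1 := (hlift B₁ (Finset.mem_coe.mp hB₁)).1
          have h2 := (hlift B₂ (Finset.mem_coe.mp hB₂)).1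
          rw [← Finset.erase_insert h1, heq, Finset.erase_insert h2]
        · intro A₁ hA₁ A₂ hA₂ hne12
          rw [Finset.mem_image] at hA₁ hA₂
          obtain ⟨B₁, hB₁, rfl⟩ := hA₁
          obtain ⟨B₂, hB₂, rfl⟩ := hA₂
          have hB12 : B₁ ≠ B₂ := by rintro rfl; exact hne12 rfl
          have hint : B₁ ∩ B₂ = Y' := hF'sun.1 B₁ hB₁ B₂ hB₂ hB12
          ext a
          simp only [Finset.mem_inter, Finset.mem_insert, ← hint]
          tauto
        · intro A hA
          rw [Finset.mem_image] at hA
          obtain ⟨B, hB, rfl⟩ := hA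
          have hxB := (hlift B hB).1
          obtain ⟨a, ha⟩ := hF'sun.2 B hB
          rw [Finset.mem_sdiff] at ha
          refine ⟨a, ?_⟩
          rw [Finset.mem_sdiff, Finset.mem_insert, Finset.mem_insert]
          have hax : a ≠ x := by rintro rfl; exact hxB ha.1
          tauto

/-- Sunflower lemma: a family of more than d·d!·(z-1)^d nonempty sets, each of
size at most d, contains a sunflower with z petals. -/
theorem stmt10 {α : Type*} [DecidableEq α] (d z : ℕ) (hd : 0 < d) (hz : 2 ≤ z)
    (S : Finset (Finset α)) (hne : ∀ A ∈ S, A.Nonempty)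
    (hsize : ∀ A ∈ S, A.card ≤ d)
    (hbig : d * Nat.factorial d * (z - 1) ^ d < S.card) :
    ∃ F ⊆ S, ∃ Y : Finset α, F.card = z ∧ IsSunflower F Y := by
  exact sunflower_aux z hz d hd S hne hsize hbig
end

section
/- Let X be a collection of pairwise disjoint sets each of size at most d with |X| ≤ h, let F be a sunflower with core Y such that X contains exactly one member X of F, and suppose |F| ≥ d(h-1)+2. Then for any subcollection D ⊆ X with X ∈ D, there exists X' ∈ F \ {X} such that (D \ {X}) ∪ {X'} is pairwise disjoint; moreover if all sets of F have size at least |X| then this exchange does not decrease the total number of covered elements. -/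
open Finset

variable {α : Type*} [DecidableEq α] {ι : Type*} [Fintype ι] [DecidableEq ι]

/-- Sunflower exchange within a subcollection: if the packing XX contains exactly
one member X0 of a large sunflower F, then in any subcollection D containing X0,
the set X0 can be exchanged for another member of F keeping disjointness; if all
members of F are at least as large as X0, the exchange does not decrease coverage. -/
theorem stmt18 {α : Type*} [DecidableEq α] (d h : ℕ) (hd : 0 < d) (hh : 0 < h)
    (XX : Finset (Finset α)) (hdisj : PairwiseDisj XX)
    (hsize : ∀ A ∈ XX, A.card ≤ d) (hXXcard : XX.card ≤ h)
    (F : Finset (Finset α)) (Y : Finset α) (hF : IsSunflower F Y)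
    (X0 : Finset α) (hX0XX : X0 ∈ XX) (hX0F : X0 ∈ F)
    (huniq : ∀ A ∈ XX, A ∈ F → A = X0)
    (hFcard : d * (h - 1) + 2 ≤ F.card)
    (D : Finset (Finset α)) (hD : D ⊆ XX) (hX0D : X0 ∈ D) :
    ∃ X' ∈ F, X' ≠ X0 ∧ PairwiseDisj ((D.erase X0) ∪ {X'}) ∧
      ((∀ A ∈ F, X0.card ≤ A.card) →
        (D.biUnion id).card ≤ (((D.erase X0) ∪ {X'}).biUnion id).card) := by
  classical
  obtain ⟨hFint, hFpet⟩ := hF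
  haveI : Nonempty α := ⟨(hFpet X0 hX0F).choose⟩
  have h2F : 1 < F.card := by omega
  obtain ⟨A1, hA1F, hA1ne⟩ : ∃ A ∈ F, A ≠ X0 := by
    obtain ⟨A, hA, hne⟩ := Finset.exists_mem_ne h2F X0
    exact ⟨A, hA, hne⟩
  have hYX0 : Y ⊆ X0 := by
    rw [← hFint X0 hX0F A1 hA1F (Ne.symm hA1ne)]; exact inter_subset_left
  set T : Finset α := (D.erase X0).biUnion id with hT
  have hYdisjB : ∀ B ∈ D.erase X0, Disjoint Y B := by
    intro B hB
    have hBne : B ≠ X0 := Finset.ne_of_mem_erase hB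
    have hBXX : B ∈ XX := hD (Finset.mem_of_mem_erase hB)
    exact Finset.disjoint_of_subset_left hYX0 (hdisj hX0XX hBXX hBne.symm)
  have hYT : Disjoint Y T := by
    rw [hT, Finset.disjoint_biUnion_right]
    exact hYdisjB
  have hTcard : T.card ≤ (h - 1) * d := by
    calc T.card ≤ ∑ B ∈ D.erase X0, B.card := Finset.card_biUnion_le
    _ ≤ ∑ _B ∈ D.erase X0, d := by
        refine Finset.sum_le_sum fun B hB => hsize B (hD (Finset.mem_of_mem_erase hB))
    _ = (D.erase X0).card * d := by rw [Finset.sum_const, smul_eq_mul]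
    _ ≤ (h - 1) * d := by
        have h1 : (D.erase X0).card = D.card - 1 := Finset.card_erase_of_mem hX0D
        have h2 : D.card ≤ h := le_trans (Finset.card_le_card hD) hXXcard
        have h3 : 0 < D.card := Finset.card_pos.mpr ⟨X0, hX0D⟩
        exact Nat.mul_le_mul_right d (by omega)
  set Bad : Finset (Finset α) := (F.erase X0).filter (fun A => ¬ Disjoint A T) with hBad
  have hBadcard : Bad.card ≤ T.card := by
    apply Finset.card_le_card_of_injOn
      (fun A => if hA : (A ∩ T).Nonempty then hA.choose else Classical.arbitrary α)
    · intro A hA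
      have hAT : (A ∩ T).Nonempty := by
        rw [hBad, Finset.mem_coe, Finset.mem_filter] at hA
        exact Finset.not_disjoint_iff_nonempty_inter.mp hA.2
      simp only [dif_pos hAT]
      exact (Finset.mem_inter.mp hAT.choose_spec).2
    · intro A hA A' hA' heq
      rw [Finset.mem_coe, hBad, Finset.mem_filter] at hA hA'
      have hAT : (A ∩ T).Nonempty := by
        rw [← Finset.not_disjoint_iff_nonempty_inter]; exact hA.2
      have hA'T : (A' ∩ T).Nonempty := by
        rw [← Finset.not_disjoint_iff_nonempty_inter]; exact hA'.2
      simp only [dif_pos hAT, dif_pos hA'T] at heq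
      by_contra hne
      have hx := hAT.choose_spec
      have hx' := hA'T.choose_spec
      rw [heq] at hx
      have hxY : hA'T.choose ∈ Y := by
        rw [← hFint A (Finset.mem_of_mem_erase hA.1) A' (Finset.mem_of_mem_erase hA'.1) hne]
        exact Finset.mem_inter.mpr ⟨(Finset.mem_inter.mp hx).1, (Finset.mem_inter.mp hx').1⟩
      exact Finset.disjoint_left.mp hYT hxY (Finset.mem_inter.mp hx').2
  have hFE : (h - 1) * d + 1 ≤ (F.erase X0).card := by
    rw [Finset.card_erase_of_mem hX0F]
    have := Nat.mul_comm d (h - 1)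
    omega
  obtain ⟨X', hX'⟩ : ∃ X' ∈ F.erase X0, Disjoint X' T := by
    by_contra hcon
    push_neg at hcon
    have : F.erase X0 ⊆ Bad := by
      intro A hA
      rw [hBad, Finset.mem_filter]
      exact ⟨hA, hcon A hA⟩
    have := Finset.card_le_card this
    omega
  obtain ⟨hX'E, hX'T⟩ := hX'
  have hX'F : X' ∈ F := Finset.mem_of_mem_erase hX'E
  have hX'ne : X' ≠ X0 := Finset.ne_of_mem_erase hX'E
  have hX'B : ∀ B ∈ D.erase X0, Disjoint X' B := by
    intro B hB
    refine Finset.disjoint_of_subset_right ?_ hX'T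
    exact Finset.subset_biUnion_of_mem id hB
  refine ⟨X', hX'F, hX'ne, ?_, ?_⟩
  · intro a ha b hb hab
    simp only [Finset.coe_union, Finset.coe_singleton, Set.mem_union,
      Set.mem_singleton_iff, Finset.mem_coe] at ha hb
    rcases ha with ha | ha <;> rcases hb with hb | hb
    · exact hdisj (hD (Finset.mem_of_mem_erase ha)) (hD (Finset.mem_of_mem_erase hb)) hab
    · subst hb; exact (hX'B a ha).symm
    · subst ha; exact hX'B b hb
    · subst ha; subst hb; exact absurd rfl hab
  · intro hge
    have hDsplit : D = insert X0 (D.erase X0) := (Finset.insert_erase hX0D).symm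
    have hold : (D.biUnion id).card ≤ ((D.erase X0).biUnion id).card + X0.card := by
      conv_lhs => rw [hDsplit]
      rw [Finset.biUnion_insert]
      calc (X0 ∪ (D.erase X0).biUnion id).card
          ≤ X0.card + ((D.erase X0).biUnion id).card := Finset.card_union_le _ _
        _ = ((D.erase X0).biUnion id).card + X0.card := Nat.add_comm _ _
    have hnew : (((D.erase X0) ∪ {X'}).biUnion id).card
        = ((D.erase X0).biUnion id).card + X'.card := by
      have hins : D.erase X0 ∪ {X'} = insert X' (D.erase X0) := by
        rw [Finset.union_comm, Finset.insert_eq]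
      rw [hins, Finset.biUnion_insert]
      show (X' ∪ T).card = T.card + X'.card
      rw [Finset.card_union_of_disjoint hX'T, Nat.add_comm]
    have := hge X' hX'F
    omega
end
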